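/- With the same setup, R̃ = (W/n)·E_σ[ ‖Σᵢ σᵢyᵢxᵢ − (εΣᵢσᵢ)·sgn(Σᵢσᵢyᵢxᵢ)‖_q ] satisfies R̃ ≥ (W/n)·E_σ[‖Σᵢσᵢyᵢxᵢ‖_q], i.e., the adversarial Rademacher complexity is at least the natural Rademacher complexity. -/
import Mathlib


/-- Coordinatewise sign, with sgn(0) = 1. -/
noncomputable def sgn (t : ℝ) : ℝ := if 0 ≤ t then 1 else -1

/-- The ℓq norm of a vector in ℝ^d (for real q ≥ 1). -/
noncomputable def lqnorm (d : ℕ) (q : ℝ) (v : Fin d → ℝ) : ℝ :=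
  (∑ i, |v i| ^ q) ^ (1 / q)

/-- Rademacher sign associated with a Boolean. -/
noncomputable def sg (b : Bool) : ℝ := if b then 1 else -1

lemma lq_mono (d : ℕ) (q : ℝ) (hq : 1 ≤ q) (u w : Fin d → ℝ)
    (h : ∀ j, |u j| ≤ |w j|) : lqnorm d q u ≤ lqnorm d q w := by
  have hq0 : 0 < q := lt_of_lt_of_le one_pos hq
  unfold lqnorm
  apply Real.rpow_le_rpow
  · exact Finset.sum_nonneg fun j _ => Real.rpow_nonneg (abs_nonneg _) _
  · exact Finset.sum_le_sum fun j _ => Real.rpow_le_rpow (abs_nonneg _) (h j) hq0.le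
  · positivity

lemma lq_tri (d : ℕ) (q : ℝ) (hq : 1 ≤ q) (u v : Fin d → ℝ) :
    lqnorm d q (fun j => u j - v j) ≤ lqnorm d q u + lqnorm d q v := by
  have := Real.Lp_add_le Finset.univ u (fun j => -v j) hq
  unfold lqnorm
  simpa [sub_eq_add_neg] using this

lemma lq_smul (d : ℕ) (q : ℝ) (hq : 1 ≤ q) (c : ℝ) (v : Fin d → ℝ) :
    lqnorm d q (fun j => c * v j) = |c| * lqnorm d q v := by
  have hq0 : q ≠ 0 := by positivity
  unfold lqnorm
  have : ∀ j, |c * v j| ^ q = |c| ^ q * |v j| ^ q := by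
    intro j
    rw [abs_mul, Real.mul_rpow (abs_nonneg _) (abs_nonneg _)]
  simp_rw [this, ← Finset.mul_sum]
  rw [Real.mul_rpow (by positivity)
      (Finset.sum_nonneg fun j _ => Real.rpow_nonneg (abs_nonneg _) _),
    ← Real.rpow_mul (abs_nonneg c), mul_one_div_cancel hq0, Real.rpow_one]

/-- The adversarial Rademacher complexity
R̃ = (W/n)·E_σ‖Σᵢσᵢyᵢxᵢ − (εΣᵢσᵢ)·sgn(Σᵢσᵢyᵢxᵢ)‖_q is at least the natural
Rademacher complexity (W/n)·E_σ‖Σᵢσᵢyᵢxᵢ‖_q. -/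
theorem stmt_10 (n d : ℕ) (hn : 0 < n) (x : Fin n → Fin d → ℝ) (y : Fin n → ℝ)
    (hy : ∀ i, y i = 1 ∨ y i = -1) (ε W p q : ℝ) (hε : 0 ≤ ε) (hW : 0 < W)
    (hp : 1 ≤ p) (hq : 1 ≤ q) (hpq : 1 / p + 1 / q = 1) :
    (∑ s : Fin n → Bool, (W / n) *
        lqnorm d q (fun j => ∑ i, sg (s i) * y i * x i j)) / 2 ^ n ≤
      (∑ s : Fin n → Bool, (W / n) *
          lqnorm d q (fun j => (∑ i, sg (s i) * y i * x i j)
            - (ε * ∑ i, sg (s i)) * sgn (∑ i, sg (s i) * y i * x i j))) / 2 ^ n := by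
  have h2n : (0:ℝ) < 2 ^ n := by positivity
  rw [div_le_div_iff_of_pos_right h2n]
  set A : (Fin n → Bool) → Fin d → ℝ := fun s j => ∑ i, sg (s i) * y i * x i j with hA
  set S : (Fin n → Bool) → ℝ := fun s => ∑ i, sg (s i) with hS
  set g : (Fin n → Bool) → ℝ := fun s =>
    (W / n) * lqnorm d q (fun j => A s j - (ε * S s) * sgn (A s j)) with hg
  show ∑ s, (W / n) * lqnorm d q (A s) ≤ ∑ s, g s
  -- flip
  have hflipbij : Function.Bijective (fun (s : Fin n → Bool) => (fun i => !s i)) := by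
    apply Function.Involutive.bijective
    intro s; funext i; simp
  have hAflip : ∀ s, A (fun i => !s i) = fun j => -A s j := by
    intro s; funext j
    simp only [hA]
    rw [← Finset.sum_neg_distrib]
    apply Finset.sum_congr rfl
    intro i _
    have : sg (!s i) = -sg (s i) := by cases s i <;> simp [sg]
    rw [this]; ring
  have hSflip : ∀ s, S (fun i => !s i) = -S s := by
    intro s
    simp only [hS]
    rw [← Finset.sum_neg_distrib]
    apply Finset.sum_congr rfl
    intro i _
    cases s i <;> simp [sg]
  -- key pointwise inequality
  have key : ∀ s, 2 * ((W / n) * lqnorm d q (A s)) ≤ g s + g (fun i => !s i) := by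
    intro s
    have hWn : 0 ≤ W / n := by positivity
    set u : Fin d → ℝ := fun j => A s j - (ε * S s) * sgn (A s j) with hu
    set v : Fin d → ℝ := fun j => -A s j - (ε * (-S s)) * sgn (-A s j) with hv
    have hgf : g (fun i => !s i) = (W / n) * lqnorm d q v := by
      simp only [hg, hAflip, hSflip, hv]
    have h1 : ∀ j, |(2:ℝ) * A s j| ≤ |u j - v j| := by
      intro j
      rcases eq_or_ne (A s j) 0 with h0 | h0
      · simp [h0]
      · have hsgn : sgn (-A s j) = -sgn (A s j) := by
          rcases lt_or_gt_of_ne h0 with hlt | hgt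
          · simp [sgn, hlt.le, not_le.2 hlt]
          · simp [sgn, hgt.le, not_le.2 (neg_neg_iff_pos.2 hgt)]
        have : u j - v j = 2 * A s j := by
          simp only [hu, hv, hsgn]; ring
        rw [this]
    have h2 : 2 * lqnorm d q (A s) ≤ lqnorm d q u + lqnorm d q v := by
      calc 2 * lqnorm d q (A s) = lqnorm d q (fun j => 2 * A s j) := by
            rw [lq_smul d q hq 2 (A s)]; norm_num
        _ ≤ lqnorm d q (fun j => u j - v j) := lq_mono d q hq _ _ h1
        _ ≤ lqnorm d q u + lqnorm d q v := lq_tri d q hq u v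
    rw [hgf]
    have : g s = (W / n) * lqnorm d q u := rfl
    rw [this]
    calc 2 * ((W / n) * lqnorm d q (A s)) = (W / n) * (2 * lqnorm d q (A s)) := by ring
      _ ≤ (W / n) * (lqnorm d q u + lqnorm d q v) := by
          exact mul_le_mul_of_nonneg_left h2 hWn
      _ = (W / n) * lqnorm d q u + (W / n) * lqnorm d q v := by ring
  have hsum : ∑ s : Fin n → Bool, g (fun i => !s i) = ∑ s : Fin n → Bool, g s :=
    Fintype.sum_bijective _ hflipbij _ _ (fun s => rfl)
  have := Finset.sum_le_sum (fun s (_ : s ∈ Finset.univ) => key s)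
  rw [Finset.sum_add_distrib, hsum] at this
  rw [← Finset.mul_sum] at this
  linarith
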